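/- arXiv:2412.15613 — 2 statements merged into one kernel-verified Lean document; each statement's English description precedes it below -/
import Mathlib

section
/- Let g : ℂ → ℂ be entire and let n be a nonnegative integer. Then for all z ∈ ℂ, the n-th derivative of the function z ↦ g(e^z) equals Σ_{i=0}^{n} S(n,i) e^{iz} g^{(i)}(e^z), where S(n,i) are the Stirling numbers of the second kind. -/
/-- Stirling numbers of the second kind `S(n,k)` (number of partitions of an `n`-set into `k`
nonempty blocks): `S(0,0) = 1`, `S(n,0) = 0` for `n ≥ 1`, `S(0,k) = 0` for `k ≥ 1`, and
`S(n+1,k+1) = (k+1)·S(n,k+1) + S(n,k)`. -/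
def stirl : ℕ → ℕ → ℕ
  | 0, 0 => 1
  | _ + 1, 0 => 0
  | 0, _ + 1 => 0
  | n + 1, k + 1 => (k + 1) * stirl n (k + 1) + stirl n k

/-!
Put `T i w = e^{iw} g^{(i)}(e^w)`, so that `T 0 = g ∘ exp`. The product and chain rules give
`T i' = i T i + T (i + 1)`, and for any family with this property the `n`-th derivative of `T 0`
is `Σ S(n,i) T i`: differentiating once more and regrouping the terms reproduces exactly the
recurrence `S(n+1,k+1) = (k+1) S(n,k+1) + S(n,k)`.
-/

open Finset

theorem stirl_eq_zero_of_lt : ∀ {n k : ℕ}, n < k → stirl n k = 0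
  | 0, _ + 1, _ => rfl
  | n + 1, k + 1, h => by
    rw [stirl, stirl_eq_zero_of_lt (by omega : n < k + 1), stirl_eq_zero_of_lt (by omega : n < k),
      mul_zero]

theorem sum_stirl_succ_smul {M : Type*} [AddCommMonoid M] (n : ℕ) (f : ℕ → M) :
    ∑ i ∈ range (n + 2), stirl (n + 1) i • f i
      = ∑ i ∈ range (n + 1), stirl n i • (i • f i + f (i + 1)) := by
  have hshift : ∑ i ∈ range (n + 1), stirl n i • i • f i
      = ∑ k ∈ range (n + 1), ((k + 1) * stirl n (k + 1)) • f (k + 1) := by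
    calc ∑ i ∈ range (n + 1), stirl n i • i • f i
        = ∑ i ∈ range (n + 2), stirl n i • i • f i := by
          rw [sum_range_succ _ (n + 1), stirl_eq_zero_of_lt n.lt_succ_self, zero_smul, add_zero]
      _ = _ := by
          rw [sum_range_succ']
          simp only [zero_smul, smul_zero, add_zero, smul_smul, mul_comm]
  rw [sum_range_succ', stirl, zero_smul, add_zero]
  simp only [stirl, add_smul, smul_add, sum_add_distrib, hshift]

theorem iteratedDeriv_eq_sum_stirl_smul {𝕜 F : Type*} [NontriviallyNormedField 𝕜]
    [NormedAddCommGroup F] [NormedSpace 𝕜 F] {T : ℕ → 𝕜 → F}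
    (hT : ∀ i x, HasDerivAt (T i) (i • T i x + T (i + 1) x) x) (n : ℕ) :
    iteratedDeriv n (T 0) = fun x => ∑ i ∈ range (n + 1), stirl n i • T i x := by
  induction n with
  | zero => ext x; simp [stirl]
  | succ n ih =>
    ext x
    have hterm (i : ℕ) : HasDerivAt (fun y => stirl n i • T i y)
        (stirl n i • (i • T i x + T (i + 1) x)) x := (hT i x).const_smul (stirl n i)
    rw [iteratedDeriv_succ, ih, (HasDerivAt.fun_sum fun i _ => hterm i).deriv, sum_stirl_succ_smul]

theorem hasDerivAt_cexp_mul_iteratedDeriv_comp_cexp {g : ℂ → ℂ} (hg : Differentiable ℂ g)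
    (i : ℕ) (w : ℂ) :
    HasDerivAt (fun w => Complex.exp (i * w) * iteratedDeriv i g (Complex.exp w))
      (i • (Complex.exp (i * w) * iteratedDeriv i g (Complex.exp w))
        + Complex.exp ((i + 1 : ℕ) * w) * iteratedDeriv (i + 1) g (Complex.exp w)) w := by
  have hexp : HasDerivAt (fun w : ℂ => Complex.exp (i * w)) (i * Complex.exp (i * w)) w := by
    simpa [mul_comm] using ((hasDerivAt_id w).const_mul (i : ℂ)).cexp
  have hgi : HasDerivAt (iteratedDeriv i g) (iteratedDeriv (i + 1) g (Complex.exp w))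
      (Complex.exp w) := by
    rw [iteratedDeriv_succ]
    exact ((hg.contDiff.differentiable_iteratedDeriv i (WithTop.coe_lt_top _)) _).hasDerivAt
  refine (hexp.mul (hgi.comp w (Complex.hasDerivAt_exp w))).congr_deriv ?_
  rw [Function.comp_apply, Nat.cast_succ, add_mul, one_mul, Complex.exp_add, nsmul_eq_mul]
  ring

/-- For entire `g` and `n ∈ ℕ`, the `n`-th derivative of `z ↦ g(e^z)` equals
`Σ_{i=0}^n S(n,i) e^{iz} g^{(i)}(e^z)` where `S(n,i)` are the Stirling numbers of the second
kind. -/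
theorem stmt7 (g : ℂ → ℂ) (hg : Differentiable ℂ g) (n : ℕ) (z : ℂ) :
    iteratedDeriv n (fun w : ℂ => g (Complex.exp w)) z
      = ∑ i ∈ Finset.range (n + 1),
          (stirl n i : ℂ) * Complex.exp ((i : ℂ) * z) * iteratedDeriv i g (Complex.exp z) := by
  have h := iteratedDeriv_eq_sum_stirl_smul (hasDerivAt_cexp_mul_iteratedDeriv_comp_cexp hg) n
  simp only [CharP.cast_eq_zero, zero_mul, Complex.exp_zero, one_mul, iteratedDeriv_zero] at h
  simp only [h, nsmul_eq_mul, mul_assoc]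
end

section
/- An entire function f of finite order solves the differential equation f‴(z) + (e^z + 1) f″(z) + ((1+i)e^z + 1) f′(z) + (i e^z + 1) f(z) = 0 if and only if there exist constants c_1, c_2 ∈ ℂ such that f(z) = c_1 e^{−iz} + c_2 e^{−z} for all z ∈ ℂ. -/
open Filter Polynomial

noncomputable def maxMod (f : ℂ → ℂ) (r : ℝ) : ℝ :=
  sSup ((fun z => ‖f z‖) '' Metric.sphere (0 : ℂ) r)

/-- The order of growth `ρ(f) = limsup_{r→∞} log log M(r,f) / log r`, as an extended real. -/
noncomputable def growthOrder (f : ℂ → ℂ) : EReal :=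
  Filter.limsup (fun r : ℝ => ((Real.log (Real.log (maxMod f r)) / Real.log r : ℝ) : EReal))
    Filter.atTop

/-- `limsup_{r→∞} log M(r,f) / r`, used to express "mean type". -/
noncomputable def typeLimsup (f : ℂ → ℂ) : EReal :=
  Filter.limsup (fun r : ℝ => ((Real.log (maxMod f r) / r : ℝ) : EReal)) Filter.atTop

/-!
Put `g = f'' + (1 + i) f' + i f`. The equation reads `g' = (i - e^z) g`, so `g = c exp (iz - e^z)`.
Along `z = r + πi` this has modulus `|c| exp (e^r - π)`, while `g` inherits from `f`, through
Cauchy's estimates, a bound `C exp ((|z| + 1)^ρ)`; hence `c = 0`. What is left is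
`(D + 1)(D + i) f = 0`, whose solutions are `c₁ e^{-iz} + c₂ e^{-z}`; conversely these make `g`,
and with it the left-hand side, vanish.
-/

open Complex

lemma exists_eq_mul_exp_of_hasDerivAt {g A a : ℂ → ℂ} (hg : ∀ z, HasDerivAt g (a z * g z) z)
    (hA : ∀ z, HasDerivAt A (a z) z) : ∃ c, ∀ z, g z = c * exp (A z) := by
  have hconst (z : ℂ) : HasDerivAt (fun z => g z * exp (-A z)) 0 z :=
    ((hg z).mul (hA z).neg.cexp).congr_deriv (by ring)
  refine ⟨g 0 * exp (-A 0), fun z => ?_⟩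
  rw [← is_const_of_deriv_eq_zero (fun z => (hconst z).differentiableAt)
    (fun z => (hconst z).deriv) z 0, mul_assoc, ← exp_add, neg_add_cancel, exp_zero, mul_one]

lemma hasDerivAt_const_mul_exp_mul (c α z : ℂ) :
    HasDerivAt (fun z => c * exp (α * z)) (c * α * exp (α * z)) z :=
  ((((hasDerivAt_id z).const_mul α).cexp).const_mul c).congr_deriv (by simp only [id]; ring)

lemma deriv_deriv_sub_add_eq_zero_iff {α β : ℂ} (hαβ : α ≠ β) {f : ℂ → ℂ}
    (hf : Differentiable ℂ f) :
    (∀ z, deriv (deriv f) z - (α + β) * deriv f z + α * β * f z = 0) ↔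
      ∃ c₁ c₂ : ℂ, ∀ z, f z = c₁ * exp (α * z) + c₂ * exp (β * z) := by
  have hlin (γ z : ℂ) : HasDerivAt (fun z => γ * z) γ z := by
    simpa using (hasDerivAt_id z).const_mul γ
  constructor
  · intro hf₂
    obtain ⟨c, hc⟩ : ∃ c, ∀ z, deriv f z - β * f z = c * exp (α * z) :=
      exists_eq_mul_exp_of_hasDerivAt (a := fun _ => α) (fun z =>
        ((hf.deriv z).hasDerivAt.sub ((hf z).hasDerivAt.const_mul β)).congr_deriv
          (by linear_combination hf₂ z)) (hlin α)
    have hαβ' : α - β ≠ 0 := sub_ne_zero.mpr hαβ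
    obtain ⟨c₂, hc₂⟩ : ∃ c₂, ∀ z, f z - c / (α - β) * exp (α * z) = c₂ * exp (β * z) :=
      exists_eq_mul_exp_of_hasDerivAt (a := fun _ => β) (fun z =>
        ((hf z).hasDerivAt.sub (hasDerivAt_const_mul_exp_mul _ _ z)).congr_deriv (by
          field_simp
          linear_combination (α - β) * hc z)) (hlin β)
    exact ⟨c / (α - β), c₂, fun z => by linear_combination hc₂ z⟩
  · rintro ⟨c₁, c₂, hc⟩ z
    have hderiv (a b : ℂ) : deriv (fun z => a * exp (α * z) + b * exp (β * z)) =
        fun z => a * α * exp (α * z) + b * β * exp (β * z) := funext fun z =>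
      ((hasDerivAt_const_mul_exp_mul a α z).add (hasDerivAt_const_mul_exp_mul b β z)).deriv
    rw [funext hc, hderiv, hderiv]
    ring

lemma norm_le_maxMod {f : ℂ → ℂ} (hf : Continuous f) (z : ℂ) : ‖f z‖ ≤ maxMod f ‖z‖ :=
  le_csSup ((isCompact_sphere 0 ‖z‖).image (continuous_norm.comp hf)).bddAbove
    ⟨z, by simp, rfl⟩

lemma eventually_maxMod_le_exp_rpow {f : ℂ → ℂ} (hord : growthOrder f < ⊤) :
    ∃ ρ : ℝ, 0 ≤ ρ ∧ ∀ᶠ r in atTop, maxMod f r ≤ Real.exp (r ^ ρ) := by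
  obtain ⟨b, hb, -⟩ := EReal.lt_iff_exists_real_btwn.mp hord
  refine ⟨max b 0, le_max_right _ _, ?_⟩
  filter_upwards [eventually_lt_of_limsup_lt hb, eventually_gt_atTop 1] with r hr hr1
  have hlogr : 0 < Real.log r := Real.log_pos hr1
  have hloglog : Real.log (Real.log (maxMod f r)) < Real.log r * max b 0 := calc
    _ < b * Real.log r := (div_lt_iff₀ hlogr).mp (EReal.coe_lt_coe_iff.mp hr)
    _ ≤ Real.log r * max b 0 := by rw [mul_comm]; gcongr; exact le_max_left _ _
  have hlog : Real.log (maxMod f r) ≤ r ^ max b 0 := by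
    rcases le_or_gt (Real.log (maxMod f r)) 0 with hM | hM
    · exact hM.trans (by positivity)
    · rw [Real.rpow_def_of_pos (by linarith), ← Real.exp_log hM]
      exact (Real.exp_lt_exp.mpr hloglog).le
  exact (Real.le_exp_log _).trans (Real.exp_le_exp.mpr hlog)

lemma exists_norm_le_mul_exp_rpow {f : ℂ → ℂ} (hf : Continuous f) (hord : growthOrder f < ⊤) :
    ∃ ρ C : ℝ, 0 ≤ ρ ∧ 0 ≤ C ∧ ∀ z, ‖f z‖ ≤ C * Real.exp (‖z‖ ^ ρ) := by
  obtain ⟨ρ, hρ, hM⟩ := eventually_maxMod_le_exp_rpow hord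
  obtain ⟨R, hR⟩ := hM.exists_forall_of_atTop
  obtain ⟨C, hC⟩ := (isCompact_closedBall (0 : ℂ) R).exists_bound_of_continuousOn hf.continuousOn
  refine ⟨ρ, max C 1, hρ, by positivity, fun z => ?_⟩
  have hexp : 1 ≤ Real.exp (‖z‖ ^ ρ) := Real.one_le_exp (by positivity)
  rcases le_or_gt ‖z‖ R with hz | hz
  · calc ‖f z‖ ≤ max C 1 := (hC z (by simpa using hz)).trans (le_max_left _ _)
      _ ≤ max C 1 * Real.exp (‖z‖ ^ ρ) := le_mul_of_one_le_right (by positivity) hexp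
  · calc ‖f z‖ ≤ Real.exp (‖z‖ ^ ρ) := (norm_le_maxMod hf z).trans (hR _ hz.le)
      _ ≤ max C 1 * Real.exp (‖z‖ ^ ρ) := le_mul_of_one_le_left (by positivity) (le_max_right _ _)

lemma norm_iteratedDeriv_le_mul_exp_rpow {f : ℂ → ℂ} (hf : Differentiable ℂ f) {ρ C : ℝ}
    (hρ : 0 ≤ ρ) (hC : 0 ≤ C) (hbound : ∀ z, ‖f z‖ ≤ C * Real.exp (‖z‖ ^ ρ)) (n : ℕ) (z : ℂ) :
    ‖iteratedDeriv n f z‖ ≤ n.factorial * (C * Real.exp ((‖z‖ + 1) ^ ρ)) := by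
  have hsphere (w : ℂ) (hw : w ∈ Metric.sphere z 1) :
      ‖f w‖ ≤ C * Real.exp ((‖z‖ + 1) ^ ρ) := by
    have hwz : ‖w‖ ≤ ‖z‖ + 1 := by
      simpa [mem_sphere_iff_norm.mp hw] using norm_le_norm_add_norm_sub' w z
    exact (hbound w).trans (by gcongr)
  simpa using norm_iteratedDeriv_le_of_forall_mem_sphere_norm_le n one_pos hf.diffContOnCl hsphere

lemma norm_deriv_deriv_add_mul_deriv_add_mul_le {f : ℂ → ℂ} (hf : Differentiable ℂ f) {ρ C : ℝ}
    (hρ : 0 ≤ ρ) (hC : 0 ≤ C) (hbound : ∀ z, ‖f z‖ ≤ C * Real.exp (‖z‖ ^ ρ)) (a b z : ℂ) :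
    ‖deriv (deriv f) z + a * deriv f z + b * f z‖ ≤
      (2 + ‖a‖ + ‖b‖) * C * Real.exp ((‖z‖ + 1) ^ ρ) := by
  have h := norm_iteratedDeriv_le_mul_exp_rpow hf hρ hC hbound
  have h₀ := h 0 z
  have h₁ := h 1 z
  have h₂ := h 2 z
  simp only [iteratedDeriv_zero, iteratedDeriv_succ] at h₀ h₁ h₂
  simp only [Nat.factorial_zero, Nat.factorial_one, Nat.factorial_two, Nat.cast_one,
    Nat.cast_ofNat, one_mul] at h₀ h₁ h₂
  calc _ ≤ ‖deriv (deriv f) z‖ + ‖a‖ * ‖deriv f z‖ + ‖b‖ * ‖f z‖ := by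
        simpa only [norm_mul] using
          norm_add₃_le (a := deriv (deriv f) z) (b := a * deriv f z) (c := b * f z)
    _ ≤ 2 * (C * Real.exp ((‖z‖ + 1) ^ ρ)) + ‖a‖ * (C * Real.exp ((‖z‖ + 1) ^ ρ))
        + ‖b‖ * (C * Real.exp ((‖z‖ + 1) ^ ρ)) := by gcongr
    _ = _ := by ring

open Asymptotics in
lemma tendsto_exp_sub_rpow_add_atTop (s k : ℝ) :
    Tendsto (fun x => Real.exp x - (x + k) ^ s) atTop atTop := by
  have hshift : (fun x : ℝ => (x + k) ^ s) =o[atTop] Real.exp := by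
    refine ((isLittleO_rpow_exp_atTop s).comp_tendsto
      (tendsto_atTop_add_const_right _ k tendsto_id)).trans_isBigO ?_
    simpa only [Function.comp_def, id, Real.exp_add, mul_comm] using
      (isBigO_refl Real.exp atTop).const_mul_left (Real.exp k)
  have hequiv : (fun x => Real.exp x - (x + k) ^ s) ~[atTop] Real.exp :=
    IsLittleO.isEquivalent (by simpa [Pi.sub_def] using hshift.neg_left)
  exact hequiv.symm.tendsto_atTop Real.tendsto_exp_atTop

lemma eq_zero_of_norm_mul_exp_sub_exp_le {c : ℂ} {C ρ : ℝ} (hρ : 0 ≤ ρ)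
    (hbound : ∀ z, ‖c * exp (I * z - exp z)‖ ≤ C * Real.exp ((‖z‖ + 1) ^ ρ)) : c = 0 := by
  by_contra hc
  have hc' : 0 < ‖c‖ := norm_pos_iff.mpr hc
  have hC : 0 ≤ C := nonneg_of_mul_nonneg_left ((norm_nonneg _).trans (hbound 0)) (Real.exp_pos _)
  obtain ⟨r, hr, hr0⟩ := (((Real.tendsto_exp_atTop.comp
    (tendsto_exp_sub_rpow_add_atTop ρ (Real.pi + 1))).eventually_gt_atTop
      (C * Real.exp Real.pi / ‖c‖)).and (eventually_ge_atTop 0)).exists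
  set p := (r + (Real.pi + 1)) ^ ρ
  set z : ℂ := r + Real.pi * I
  have harg : I * z - exp z = ((Real.exp r - Real.pi : ℝ) : ℂ) + r * I := by
    rw [exp_add, exp_pi_mul_I, ← ofReal_exp]
    push_cast
    linear_combination (Real.pi : ℂ) * I_sq
  have hnorm : ‖c * exp (I * z - exp z)‖ = ‖c‖ * Real.exp (Real.exp r - Real.pi) := by
    rw [harg, norm_mul, norm_exp, add_re, ofReal_re, mul_I_re, ofReal_im, neg_zero, add_zero]
  have hz : ‖z‖ + 1 ≤ r + (Real.pi + 1) := by
    have : ‖z‖ ≤ r + Real.pi := (norm_add_le _ _).trans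
      (by simp [abs_of_nonneg hr0, abs_of_nonneg Real.pi_pos.le])
    linarith
  have hupper : ‖c‖ * Real.exp (Real.exp r - Real.pi) ≤ C * Real.exp p := by
    rw [← hnorm]
    exact (hbound z).trans (by gcongr; exact Real.rpow_le_rpow (by positivity) hz hρ)
  have hlower : C * Real.exp p < ‖c‖ * Real.exp (Real.exp r - Real.pi) := by
    have h := (div_lt_iff₀ hc').mp hr
    simp only [Function.comp_apply] at h
    calc C * Real.exp p = C * Real.exp Real.pi * Real.exp (p - Real.pi) := by
          rw [mul_assoc, ← Real.exp_add]; ring_nf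
      _ < Real.exp (Real.exp r - p) * ‖c‖ * Real.exp (p - Real.pi) := by gcongr
      _ = ‖c‖ * Real.exp (Real.exp r - Real.pi) := by
          rw [mul_comm _ ‖c‖, mul_assoc, ← Real.exp_add]; ring_nf
  exact hupper.not_gt hlower

-- The operator factors as `(D + e^z - i) ∘ (D^2 + (1 + i) D + i)`.
lemma hasDerivAt_deriv_deriv_add_mul_deriv_add_mul {f : ℂ → ℂ} (hf : Differentiable ℂ f) (z : ℂ) :
    HasDerivAt (fun z => deriv (deriv f) z + (1 + I) * deriv f z + I * f z)
      (iteratedDeriv 3 f z + (exp z + 1) * iteratedDeriv 2 f z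
        + ((1 + I) * exp z + 1) * deriv f z + (I * exp z + 1) * f z
        - (exp z - I) * (deriv (deriv f) z + (1 + I) * deriv f z + I * f z)) z := by
  refine (((hf.deriv.deriv z).hasDerivAt.add ((hf.deriv z).hasDerivAt.const_mul _)).add
    ((hf z).hasDerivAt.const_mul _)).congr_deriv ?_
  simp only [iteratedDeriv_succ, iteratedDeriv_zero]
  linear_combination -(deriv f z + f z) * I_sq

/-- A finite order entire function `f` solves
`f‴ + (e^z+1)f″ + ((1+i)e^z+1)f′ + (ie^z+1)f = 0` iff `f(z) = c₁e^{−iz} + c₂e^{−z}` for some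
constants `c₁, c₂ ∈ ℂ`. -/
theorem stmt12 (f : ℂ → ℂ) (hf : Differentiable ℂ f) (hord : growthOrder f < ⊤) :
    (∀ z : ℂ, iteratedDeriv 3 f z + (Complex.exp z + 1) * iteratedDeriv 2 f z
        + ((1 + Complex.I) * Complex.exp z + 1) * deriv f z
        + (Complex.I * Complex.exp z + 1) * f z = 0) ↔
    ∃ c₁ c₂ : ℂ, ∀ z : ℂ,
      f z = c₁ * Complex.exp (-Complex.I * z) + c₂ * Complex.exp (-z) := by
  have hg := hasDerivAt_deriv_deriv_add_mul_deriv_add_mul hf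
  have hsolve := deriv_deriv_sub_add_eq_zero_iff (α := -I) (β := -1)
    (fun h => by simpa using congrArg im h) hf
  simp only [neg_one_mul] at hsolve
  rw [← hsolve]
  refine ⟨fun hode => ?_, fun hg0 z => ?_⟩
  · obtain ⟨c, hc⟩ := exists_eq_mul_exp_of_hasDerivAt (a := fun z => I - exp z)
      (A := fun z => I * z - exp z) (fun z => (hg z).congr_deriv (by rw [hode z]; ring))
      (fun z => (((hasDerivAt_id z).const_mul I).sub (hasDerivAt_exp z)).congr_deriv (by simp))
    obtain ⟨ρ, C, hρ, hC, hbound⟩ := exists_norm_le_mul_exp_rpow hf.continuous hord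
    have hc0 : c = 0 := eq_zero_of_norm_mul_exp_sub_exp_le hρ fun z => by
      rw [← hc]; exact norm_deriv_deriv_add_mul_deriv_add_mul_le hf hρ hC hbound _ _ z
    intro z
    linear_combination hc z + exp (I * z - exp z) * hc0
  · have hzero : (fun z => deriv (deriv f) z + (1 + I) * deriv f z + I * f z) = fun _ => 0 :=
      funext fun z => by linear_combination hg0 z
    have hderiv := (hg z).unique (hzero ▸ hasDerivAt_const z 0)
    linear_combination hderiv + (exp z - I) * hg0 z
end
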